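/- Let n ≥ 2, let (A, 𝒜, μ) be a σ-finite measure space, and for each 1 ≤ i ≤ n let M_i be a set of probability densities with respect to μ. Identify the simplex 𝕊_{n−1} with the set of probability densities on {1,…,n} with respect to counting measure. Let δ > 0 and η > 0. If 𝕊_{n−1} is covered by a finite family of N_0 brackets each of Hellinger diameter at most δ, and each M_i is covered by a finite family of N_i brackets each of Hellinger diameter at most η, then the mixture model M = { ∑_{i=1}^n π_i s_i : π ∈ 𝕊_{n−1}, s_i ∈ M_i } is covered by a finite family of at most N_0·∏_{i=1}^n N_i brackets, each of Hellinger diameter at most δ + η + δη. -/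

import Mathlib

open MeasureTheory Real BigOperators

noncomputable section

/-- Hellinger distance between two nonnegative functions with respect to a
measure `μ`. -/
def hellM {α : Type*} [MeasurableSpace α] (μ : Measure α) (s t : α → ℝ) : ℝ :=
  Real.sqrt (∫ a, (Real.sqrt (s a) - Real.sqrt (t a)) ^ 2 ∂μ)

/-- Hellinger distance between two functions on a finite type
(with respect to counting measure). -/
def hellF {𝒳 : Type*} [Fintype 𝒳] (p q : 𝒳 → ℝ) : ℝ :=
  Real.sqrt (∑ x, (Real.sqrt (p x) - Real.sqrt (q x)) ^ 2)

/-- `M` is covered by `N` brackets, each of Hellinger diameter at most `ε`. -/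
def IsBracketCover {α : Type*} [MeasurableSpace α] (μ : Measure α)
    (M : Set (α → ℝ)) (N : ℕ) (ε : ℝ) : Prop :=
  ∃ lo up : Fin N → α → ℝ,
    (∀ i, Measurable (lo i) ∧ Measurable (up i) ∧
      Integrable (lo i) μ ∧ Integrable (up i) μ ∧ hellM μ (lo i) (up i) ≤ ε) ∧
    ∀ s ∈ M, ∃ i, ∀ a, lo i a ≤ s a ∧ s a ≤ up i a

/-! A bracket that meets a set of nonnegative functions of mass at most `1` can be shrunk to
`[max lo 0, up]`: same Hellinger diameter, nonnegative ends, lower end of mass at most `1`, hence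
upper end of mass at most `(1 + ε)²` by the triangle inequality in `L²`. For such brackets
`[A, B]` of the weights and `[uᵢ, vᵢ]` of the components, write `√(∑ Aᵢ uᵢ)` and `√(∑ Bᵢ vᵢ)` as
Euclidean norms of `(√Aᵢ √uᵢ)ᵢ` and `(√Bᵢ √vᵢ)ᵢ`: their difference is pointwise at most `X + Y`
with `X² = ∑ Aᵢ (√uᵢ - √vᵢ)²` and `Y² = ∑ (√Aᵢ - √Bᵢ)² vᵢ`, and Minkowski's inequality in
`L²(μ)` bounds the diameter of `[∑ Aᵢ uᵢ, ∑ Bᵢ vᵢ]` by `‖X‖ + ‖Y‖ ≤ η + δ (1 + η)`. -/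

section L2
variable {α : Type*} [MeasurableSpace α] {μ : Measure α}

theorem MeasureTheory.MemLp.eLpNorm_two_eq_sqrt_integral_sq {f : α → ℝ} (hf : MemLp f 2 μ) :
    eLpNorm f 2 μ = ENNReal.ofReal √(∫ a, f a ^ 2 ∂μ) := by
  rw [hf.eLpNorm_eq_integral_rpow_norm two_ne_zero ENNReal.ofNat_ne_top, sqrt_eq_rpow]
  norm_num

theorem sqrt_integral_sq_le_of_abs_le {f g h : α → ℝ} (hh : AEStronglyMeasurable h μ)
    (hf : MemLp f 2 μ) (hg : MemLp g 2 μ) (hle : ∀ a, |h a| ≤ |f a| + |g a|) :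
    √(∫ a, h a ^ 2 ∂μ) ≤ √(∫ a, f a ^ 2 ∂μ) + √(∫ a, g a ^ 2 ∂μ) := by
  have hfg : MemLp (fun a => |f a| + |g a|) 2 μ := hf.abs.add hg.abs
  have hh2 : MemLp h 2 μ := hfg.of_le hh (Filter.Eventually.of_forall fun a => by
    simpa [abs_of_nonneg (add_nonneg (abs_nonneg (f a)) (abs_nonneg (g a)))] using hle a)
  have key : eLpNorm h 2 μ ≤ eLpNorm f 2 μ + eLpNorm g 2 μ :=
    calc eLpNorm h 2 μ ≤ eLpNorm (fun a => |f a| + |g a|) 2 μ := eLpNorm_mono_real hle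
      _ ≤ eLpNorm (fun a => |f a|) 2 μ + eLpNorm (fun a => |g a|) 2 μ :=
        eLpNorm_add_le hf.abs.1 hg.abs.1 one_le_two
      _ = eLpNorm f 2 μ + eLpNorm g 2 μ := by
        simp only [← Real.norm_eq_abs, eLpNorm_norm]
  rw [hh2.eLpNorm_two_eq_sqrt_integral_sq, hf.eLpNorm_two_eq_sqrt_integral_sq,
    hg.eLpNorm_two_eq_sqrt_integral_sq, ← ENNReal.ofReal_add (sqrt_nonneg _) (sqrt_nonneg _),
    ENNReal.ofReal_le_ofReal_iff (by positivity)] at key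
  exact key

theorem memLp_two_sqrt {f : α → ℝ} (hf : Integrable f μ) (hf0 : ∀ a, 0 ≤ f a) :
    MemLp (fun a => √(f a)) 2 μ := by
  refine (memLp_two_iff_integrable_sq (continuous_sqrt.comp_aestronglyMeasurable hf.1)).2 ?_
  simpa only [sq_sqrt (hf0 _)] using hf

end L2

theorem abs_sqrt_sum_mul_sub_sqrt_sum_mul_le {ι : Type*} [Fintype ι] {A B u v : ι → ℝ}
    (hA : ∀ i, 0 ≤ A i) (hB : ∀ i, 0 ≤ B i) (hu : ∀ i, 0 ≤ u i) (hv : ∀ i, 0 ≤ v i) :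
    |√(∑ i, A i * u i) - √(∑ i, B i * v i)|
      ≤ √(∑ i, A i * (√(u i) - √(v i)) ^ 2) + √(∑ i, (√(A i) - √(B i)) ^ 2 * v i) := by
  have norm_eq (f : ι → ℝ) : ‖WithLp.toLp 2 f‖ = √(∑ i, f i ^ 2) := by
    simp [EuclideanSpace.norm_eq]
  let x := WithLp.toLp 2 fun i => √(A i) * √(u i)
  let y := WithLp.toLp 2 fun i => √(B i) * √(v i)
  let d := WithLp.toLp 2 fun i => √(A i) * (√(u i) - √(v i))
  let e := WithLp.toLp 2 fun i => (√(A i) - √(B i)) * √(v i)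
  have hxy : x - y = d + e := by
    ext i; simp [x, y, d, e]; ring
  calc |√(∑ i, A i * u i) - √(∑ i, B i * v i)| = |‖x‖ - ‖y‖| := by
        simp only [x, y, norm_eq, mul_pow, sq_sqrt (hA _), sq_sqrt (hB _), sq_sqrt (hu _),
          sq_sqrt (hv _)]
    _ ≤ ‖d + e‖ := hxy ▸ abs_norm_sub_norm_le x y
    _ ≤ ‖d‖ + ‖e‖ := norm_add_le d e
    _ = _ := by simp only [d, e, norm_eq, mul_pow, sq_sqrt (hA _), sq_sqrt (hv _)]

theorem sqrt_max_zero (x : ℝ) : √(max x 0) = √x := by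
  rcases le_total x 0 with h | h
  · rw [max_eq_right h, sqrt_zero, sqrt_eq_zero_of_nonpos h]
  · rw [max_eq_left h]

theorem hellF_eq_hellM_count {ι : Type*} [Fintype ι] [MeasurableSpace ι]
    [MeasurableSingletonClass ι] (p q : ι → ℝ) : hellF p q = hellM Measure.count p q := by
  simp [hellF, hellM]

section Hellinger
variable {α : Type*} [MeasurableSpace α] {μ : Measure α}

theorem integral_sq_le_of_hellM_le {s t : α → ℝ} {ε : ℝ} (h : hellM μ s t ≤ ε) :
    ∫ a, (√(s a) - √(t a)) ^ 2 ∂μ ≤ ε ^ 2 :=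
  (sqrt_le_iff.1 h).2

theorem MeasureTheory.Integrable.sqrt_sub_sqrt_sq {s t : α → ℝ} (hs : Integrable s μ)
    (ht : Integrable t μ) (hs0 : ∀ a, 0 ≤ s a) (ht0 : ∀ a, 0 ≤ t a) :
    Integrable (fun a => (√(s a) - √(t a)) ^ 2) μ :=
  ((memLp_two_sqrt hs hs0).sub (memLp_two_sqrt ht ht0)).integrable_sq

theorem sqrt_integral_le_sqrt_integral_add_hellM {s t : α → ℝ} (hs : Integrable s μ)
    (ht : Integrable t μ) (hs0 : ∀ a, 0 ≤ s a) (ht0 : ∀ a, 0 ≤ t a) :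
    √(∫ a, t a ∂μ) ≤ √(∫ a, s a ∂μ) + hellM μ s t := by
  have key := sqrt_integral_sq_le_of_abs_le (memLp_two_sqrt ht ht0).1 (memLp_two_sqrt hs hs0)
    ((memLp_two_sqrt hs hs0).sub (memLp_two_sqrt ht ht0)) fun a => by
      have := abs_sub_abs_le_abs_sub (√(t a)) (√(s a))
      rw [abs_sub_comm] at this
      simp only [Pi.sub_apply]
      linarith
  simpa only [hellM, Pi.sub_apply, sq_sqrt (hs0 _), sq_sqrt (ht0 _)] using key

end Hellinger

structure IsNormalizedBracket {α : Type*} [MeasurableSpace α] (μ : Measure α)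
    (lo up : α → ℝ) (ε : ℝ) : Prop where
  measurable_lo : Measurable lo
  measurable_up : Measurable up
  integrable_lo : Integrable lo μ
  integrable_up : Integrable up μ
  hellM_le : hellM μ lo up ≤ ε
  nonneg_lo : ∀ a, 0 ≤ lo a
  nonneg_up : ∀ a, 0 ≤ up a
  integral_lo_le_one : ∫ a, lo a ∂μ ≤ 1

namespace IsNormalizedBracket
variable {α : Type*} [MeasurableSpace α] {μ : Measure α} {lo up : α → ℝ} {ε : ℝ}

theorem integral_up_le (h : IsNormalizedBracket μ lo up ε) : ∫ a, up a ∂μ ≤ (1 + ε) ^ 2 := by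
  have key := sqrt_integral_le_sqrt_integral_add_hellM h.integrable_lo h.integrable_up
    h.nonneg_lo h.nonneg_up
  have hlo := (sqrt_le_sqrt h.integral_lo_le_one).trans_eq sqrt_one
  have hε : 0 ≤ ε := (sqrt_nonneg _).trans h.hellM_le
  rw [← sqrt_le_left (by positivity)]
  linarith [h.hellM_le]

end IsNormalizedBracket

section Mixture
variable {α : Type*} [MeasurableSpace α] {μ : Measure α} {ι : Type*} [Fintype ι]

theorem integrable_sum_mul (w : ι → ℝ) {g : ι → α → ℝ} (hg : ∀ i, Integrable (g i) μ) :
    Integrable (fun a => ∑ i, w i * g i a) μ :=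
  integrable_finsetSum _ fun i _ => (hg i).const_mul (w i)

theorem integral_sum_mul_le {w : ι → ℝ} {g : ι → α → ℝ} {b : ℝ} (hw : ∀ i, 0 ≤ w i)
    (hg : ∀ i, Integrable (g i) μ) (hgb : ∀ i, ∫ a, g i a ∂μ ≤ b) :
    ∫ a, ∑ i, w i * g i a ∂μ ≤ (∑ i, w i) * b := by
  rw [integral_finsetSum _ fun i _ => (hg i).const_mul (w i), Finset.sum_mul]
  exact Finset.sum_le_sum fun i _ =>
    (integral_const_mul (w i) _).trans_le (mul_le_mul_of_nonneg_left (hgb i) (hw i))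

theorem hellM_mixture_le [MeasurableSpace ι] [MeasurableSingletonClass ι] {A B : ι → ℝ}
    {u v : ι → α → ℝ} {δ η : ℝ} (hη : 0 ≤ η) (hAB : IsNormalizedBracket .count A B δ)
    (huv : ∀ i, IsNormalizedBracket μ (u i) (v i) η) :
    hellM μ (fun a => ∑ i, A i * u i a) (fun a => ∑ i, B i * v i a) ≤ η + δ * (1 + η) := by
  have hA := hAB.nonneg_lo
  have hB := hAB.nonneg_up
  have hA1 : ∑ i, A i ≤ 1 := by simpa using hAB.integral_lo_le_one
  have hδ : 0 ≤ δ := (sqrt_nonneg _).trans hAB.hellM_le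
  have hu i := (huv i).integrable_lo
  have hv i := (huv i).integrable_up
  have hu0 i := (huv i).nonneg_lo
  have hv0 i := (huv i).nonneg_up
  set SX : α → ℝ := fun a => ∑ i, A i * (√(u i a) - √(v i a)) ^ 2
  set SY : α → ℝ := fun a => ∑ i, (√(A i) - √(B i)) ^ 2 * v i a
  have hSX0 : ∀ a, 0 ≤ SX a := fun a => Finset.sum_nonneg fun i _ =>
    mul_nonneg (hA i) (sq_nonneg _)
  have hSY0 : ∀ a, 0 ≤ SY a := fun a => Finset.sum_nonneg fun i _ =>
    mul_nonneg (sq_nonneg _) (hv0 i a)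
  have hSX : Integrable SX μ :=
    integrable_sum_mul A fun i => (hu i).sqrt_sub_sqrt_sq (hv i) (hu0 i) (hv0 i)
  have hSY : Integrable SY μ := integrable_sum_mul _ hv
  have hIX : ∫ a, SX a ∂μ ≤ η ^ 2 := calc
    _ ≤ (∑ i, A i) * η ^ 2 := integral_sum_mul_le hA
          (fun i => (hu i).sqrt_sub_sqrt_sq (hv i) (hu0 i) (hv0 i))
          fun i => integral_sq_le_of_hellM_le (huv i).hellM_le
    _ ≤ η ^ 2 := mul_le_of_le_one_left (sq_nonneg η) hA1
  have hIY : ∫ a, SY a ∂μ ≤ (δ * (1 + η)) ^ 2 := calc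
    _ ≤ (∑ i, (√(A i) - √(B i)) ^ 2) * (1 + η) ^ 2 :=
          integral_sum_mul_le (fun i => sq_nonneg _) hv fun i => (huv i).integral_up_le
    _ ≤ δ ^ 2 * (1 + η) ^ 2 := by
          gcongr
          simpa [hellF_eq_hellM_count] using integral_sq_le_of_hellM_le hAB.hellM_le
    _ = (δ * (1 + η)) ^ 2 := by ring
  have hpt : ∀ a, |√(∑ i, A i * u i a) - √(∑ i, B i * v i a)| ≤ |√(SX a)| + |√(SY a)| :=
    fun a => by
      simpa only [abs_of_nonneg (sqrt_nonneg _)] using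
        abs_sqrt_sum_mul_sub_sqrt_sum_mul_le hA hB (fun i => hu0 i a) fun i => hv0 i a
  have hL := memLp_two_sqrt (integrable_sum_mul A hu)
    fun a => Finset.sum_nonneg fun i _ => mul_nonneg (hA i) (hu0 i a)
  have hU := memLp_two_sqrt (integrable_sum_mul B hv)
    fun a => Finset.sum_nonneg fun i _ => mul_nonneg (hB i) (hv0 i a)
  calc hellM μ _ _ ≤ √(∫ a, √(SX a) ^ 2 ∂μ) + √(∫ a, √(SY a) ^ 2 ∂μ) :=
        sqrt_integral_sq_le_of_abs_le (hL.sub hU).1 (memLp_two_sqrt hSX hSX0)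
          (memLp_two_sqrt hSY hSY0) hpt
    _ ≤ η + δ * (1 + η) := by
        simp only [sq_sqrt (hSX0 _), sq_sqrt (hSY0 _)]
        gcongr
        · exact (sqrt_le_left hη).2 hIX
        · exact (sqrt_le_left (by positivity)).2 hIY

end Mixture

section Cover
variable {α : Type*} [MeasurableSpace α] {μ : Measure α} {M : Set (α → ℝ)} {ε : ℝ}

theorem isBracketCover_of_fintype {κ : Type*} [Fintype κ] (lo up : κ → α → ℝ)
    (hbr : ∀ k, Measurable (lo k) ∧ Measurable (up k) ∧
      Integrable (lo k) μ ∧ Integrable (up k) μ ∧ hellM μ (lo k) (up k) ≤ ε)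
    (hcov : ∀ s ∈ M, ∃ k, ∀ a, lo k a ≤ s a ∧ s a ≤ up k a) :
    IsBracketCover μ M (Fintype.card κ) ε := by
  let e := Fintype.equivFin κ
  refine ⟨lo ∘ e.symm, up ∘ e.symm, fun i => hbr _, fun s hs => ?_⟩
  obtain ⟨k, hk⟩ := hcov s hs
  exact ⟨e k, by simpa using hk⟩

theorem isBracketCover_count_of_hellF_le {ι : Type*} [Fintype ι] [MeasurableSpace ι]
    [MeasurableSingletonClass ι] {S : Set (ι → ℝ)} {N : ℕ} (lo up : Fin N → ι → ℝ)
    (hd : ∀ j, hellF (lo j) (up j) ≤ ε) (hcov : ∀ p ∈ S, ∃ j, ∀ i, lo j i ≤ p i ∧ p i ≤ up j i) :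
    IsBracketCover .count S N ε :=
  ⟨lo, up, fun j => ⟨.of_discrete, .of_discrete, .of_finite, .of_finite,
    hellF_eq_hellM_count (lo j) (up j) ▸ hd j⟩, hcov⟩

theorem IsBracketCover.exists_normalized {N : ℕ} (h : IsBracketCover μ M N ε) (hε : 0 ≤ ε)
    (hM : ∀ s ∈ M, (∀ a, 0 ≤ s a) ∧ Integrable s μ ∧ ∫ a, s a ∂μ ≤ 1) :
    ∃ lo up : Fin N → α → ℝ, (∀ k, IsNormalizedBracket μ (lo k) (up k) ε) ∧
      ∀ s ∈ M, ∃ k, ∀ a, lo k a ≤ s a ∧ s a ≤ up k a := by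
  obtain ⟨lo, up, hbr, hcov⟩ := h
  have shrink (k : Fin N) : ∃ l u : α → ℝ, IsNormalizedBracket μ l u ε ∧
      ∀ s ∈ M, (∀ a, lo k a ≤ s a ∧ s a ≤ up k a) → ∀ a, l a ≤ s a ∧ s a ≤ u a := by
    obtain ⟨hlm, hum, hli, hui, hlu⟩ := hbr k
    by_cases hne : ∃ s ∈ M, ∀ a, lo k a ≤ s a ∧ s a ≤ up k a
    · obtain ⟨s, hsM, hs⟩ := hne
      obtain ⟨hs0, hsi, hs1⟩ := hM s hsM
      refine ⟨fun a => max (lo k a) 0, up k,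
        ⟨hlm.max measurable_const, hum, hli.pos_part, hui, ?_, fun a => le_max_right _ _,
          fun a => (hs0 a).trans (hs a).2, ?_⟩,
        fun t ht hbt a => ⟨max_le (hbt a).1 ((hM t ht).1 a), (hbt a).2⟩⟩
      · simpa only [hellM, sqrt_max_zero] using hlu
      · exact (integral_mono hli.pos_part hsi fun a => max_le (hs a).1 (hs0 a)).trans hs1
    · refine ⟨0, 0, ⟨measurable_const, measurable_const, integrable_zero _ _ _,
        integrable_zero _ _ _, by simpa [hellM] using hε, fun _ => le_rfl, fun _ => le_rfl,
        by simp⟩, fun s hs hbs => (hne ⟨s, hs, hbs⟩).elim⟩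
  choose l u hlu hshrink using shrink
  refine ⟨l, u, hlu, fun s hs => ?_⟩
  obtain ⟨k, hk⟩ := hcov s hs
  exact ⟨k, hshrink k s hs hk⟩

end Cover

theorem bracket_cover_mixture_general {α : Type*} [MeasurableSpace α] (μ : Measure α)
    (n : ℕ)
    (M : Fin n → Set (α → ℝ))
    (hM : ∀ i, ∀ s ∈ M i,
      Measurable s ∧ (∀ a, 0 ≤ s a) ∧ Integrable s μ ∧ ∫ a, s a ∂μ = 1)
    (δ η : ℝ) (hδ : 0 < δ) (hη : 0 < η)
    (N₀ : ℕ) (N : Fin n → ℕ)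
    -- a bracket covering of the simplex, seen as the set of probability
    -- densities on {1,…,n} with respect to counting measure
    (hcov0 : ∃ plo pup : Fin N₀ → Fin n → ℝ,
      (∀ j, hellF (plo j) (pup j) ≤ δ) ∧
      ∀ p ∈ stdSimplex ℝ (Fin n), ∃ j, ∀ i, plo j i ≤ p i ∧ p i ≤ pup j i)
    (hcov : ∀ i, IsBracketCover μ (M i) (N i) η) :
    ∃ N' ≤ N₀ * ∏ i, N i,
      IsBracketCover μ
        {s : α → ℝ | ∃ (p : Fin n → ℝ) (f : Fin n → α → ℝ),
          p ∈ stdSimplex ℝ (Fin n) ∧ (∀ i, f i ∈ M i) ∧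
          ∀ a, s a = ∑ i, p i * f i a}
        N' (δ + η + δ * η) := by
  obtain ⟨plo, pup, hpd, hpcov⟩ := hcov0
  obtain ⟨A, B, hAB, hAcov⟩ :=
    (isBracketCover_count_of_hellF_le plo pup hpd hpcov).exists_normalized hδ.le
      fun p hp => ⟨hp.1, .of_finite, by simp [hp.2]⟩
  choose lo up hlu hlocov using fun i => (hcov i).exists_normalized hη.le
    fun s hs => ⟨(hM i s hs).2.1, (hM i s hs).2.2.1, (hM i s hs).2.2.2.le⟩
  refine ⟨_, (by simp : Fintype.card (Fin N₀ × ∀ i, Fin (N i)) = _).le,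
    isBracketCover_of_fintype (fun jk a => ∑ i, A jk.1 i * lo i (jk.2 i) a)
      (fun jk a => ∑ i, B jk.1 i * up i (jk.2 i) a) (fun jk => ⟨?_, ?_, ?_, ?_, ?_⟩) ?_⟩
  · exact Finset.measurable_sum _ fun i _ => (hlu i _).measurable_lo.const_mul _
  · exact Finset.measurable_sum _ fun i _ => (hlu i _).measurable_up.const_mul _
  · exact integrable_sum_mul _ fun i => (hlu i _).integrable_lo
  · exact integrable_sum_mul _ fun i => (hlu i _).integrable_up
  · exact (hellM_mixture_le hη.le (hAB jk.1) fun i => hlu i (jk.2 i)).trans_eq (by ring)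
  · rintro s ⟨p, f, hp, hf, hs⟩
    obtain ⟨j, hj⟩ := hAcov p hp
    choose k hk using fun i => hlocov i (f i) (hf i)
    refine ⟨(j, k), fun a => hs a ▸
      ⟨Finset.sum_le_sum fun i _ => ?_, Finset.sum_le_sum fun i _ => ?_⟩⟩
    · exact mul_le_mul (hj i).1 (hk i a).1 ((hlu i _).nonneg_lo a) (hp.1 i)
    · exact mul_le_mul (hj i).2 (hk i a).2 ((hM i _ (hf i)).2.1 a) ((hAB j).nonneg_up i)

/-- **Lemma 3: bracketing entropy of mixture densities.** -/
theorem bracket_cover_mixture {α : Type*} [MeasurableSpace α] (μ : Measure α)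
    [SigmaFinite μ] (n : ℕ) (hn : 2 ≤ n)
    (M : Fin n → Set (α → ℝ))
    (hM : ∀ i, ∀ s ∈ M i,
      Measurable s ∧ (∀ a, 0 ≤ s a) ∧ Integrable s μ ∧ ∫ a, s a ∂μ = 1)
    (δ η : ℝ) (hδ : 0 < δ) (hη : 0 < η)
    (N₀ : ℕ) (N : Fin n → ℕ)
    -- a bracket covering of the simplex, seen as the set of probability
    -- densities on {1,…,n} with respect to counting measure
    (hcov0 : ∃ plo pup : Fin N₀ → Fin n → ℝ,
      (∀ j, hellF (plo j) (pup j) ≤ δ) ∧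
      ∀ p ∈ stdSimplex ℝ (Fin n), ∃ j, ∀ i, plo j i ≤ p i ∧ p i ≤ pup j i)
    (hcov : ∀ i, IsBracketCover μ (M i) (N i) η) :
    ∃ N' ≤ N₀ * ∏ i, N i,
      IsBracketCover μ
        {s : α → ℝ | ∃ (p : Fin n → ℝ) (f : Fin n → α → ℝ),
          p ∈ stdSimplex ℝ (Fin n) ∧ (∀ i, f i ∈ M i) ∧
          ∀ a, s a = ∑ i, p i * f i a}
        N' (δ + η + δ * η) :=
  bracket_cover_mixture_general μ n M hM δ η hδ hη N₀ N hcov0 hcov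

end
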